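/- For any three normalized circle quadruples K₁, K₂, K₃ and any real t, one has (V·t)² − U·W′ = Δ₄²·D, where W′ = W·t² − (1/4)·Δ₄²·(1−t²) and D = (1/4)·U·(1−t²) + Q₁Q₂Q₃·t². (Here t plays the role of cos Ψ₀ in the isogonal Apollonius problem.) -/

import Mathlib

/-!
Regard a quadruple `K = (a, b, c, d)` as a vector of `ℝ⁴` with the quadratic form
`b² + c² - a d`; its polarisation `⟪K, K'⟫` satisfies `⟪K₁, K₂⟫ = 1 - 2 Q(K₁, K₂)` for normalized
quadruples, so the Gram matrix `G` of `K₁, K₂, K₃` is a function of `Q₁, Q₂, Q₃` alone.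
Adjoining the vector `(0, 0, 0, 1)`, which is isotropic and pairs with `Kᵢ` to `-aᵢ / 2`, gives a
`4 × 4` matrix of determinant `Δ₄`, and the multiplicativity of the determinant applied to its
Gram matrix yields `Δ₄² = aᵀ adj(G) a`. With that, `V² - U W = Q₁ Q₂ Q₃ Δ₄²` becomes a polynomial
identity in `a` and `Q`, and the claim is `t²` times it.
-/

open Matrix

noncomputable def circleForm : Matrix (Fin 4) (Fin 4) ℝ :=
  !![0, 0, 0, -1/2; 0, 1, 0, 0; 0, 0, 1, 0; -1/2, 0, 0, 0]

lemma det_circleForm : circleForm.det = -1/4 := by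
  simp [circleForm, det_succ_row_zero, Fin.sum_univ_succ, Fin.succAbove]
  norm_num

lemma dotProduct_circleForm_mulVec (K K' : Fin 4 → ℝ) :
    K ⬝ᵥ circleForm *ᵥ K' = K 1 * K' 1 + K 2 * K' 2 - (K 0 * K' 3 + K' 0 * K 3) / 2 := by
  simp [circleForm, dotProduct, mulVec, Fin.sum_univ_succ]
  ring

noncomputable def circleGram (K : Fin 3 → Fin 4 → ℝ) : Matrix (Fin 3) (Fin 3) ℝ :=
  of fun i j => K i ⬝ᵥ circleForm *ᵥ K j

def borderedMatrix {R : Type*} [Zero R] (G : Matrix (Fin 3) (Fin 3) R) (u : Fin 3 → R) :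
    Matrix (Fin 4) (Fin 4) R :=
  !![G 0 0, G 0 1, G 0 2, u 0; G 1 0, G 1 1, G 1 2, u 1; G 2 0, G 2 1, G 2 2, u 2; u 0, u 1, u 2, 0]

lemma det_borderedMatrix {R : Type*} [CommRing R] (G : Matrix (Fin 3) (Fin 3) R)
    (u : Fin 3 → R) : (borderedMatrix G u).det = -(u ⬝ᵥ adjugate G *ᵥ u) := by
  simp [borderedMatrix, det_succ_row_zero, Fin.sum_univ_succ, Fin.succAbove, adjugate_fin_three,
    dotProduct, mulVec]
  ring

lemma sq_det_eq_dotProduct_adjugate_circleGram (K : Fin 3 → Fin 4 → ℝ) :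
    (of fun i j : Fin 3 => K i j.castSucc).det ^ 2
      = (fun i => K i 0) ⬝ᵥ adjugate (circleGram K) *ᵥ (fun i => K i 0) := by
  set M : Matrix (Fin 4) (Fin 4) ℝ := of ![K 0, K 1, K 2, Pi.single 3 1]
  have hdet : M.det = (of fun i j : Fin 3 => K i j.castSucc).det := by
    simp [M, det_succ_row_zero, Fin.sum_univ_succ, Fin.succAbove]
  have hgram :
      M * circleForm * Mᵀ = borderedMatrix (circleGram K) ((-1/2 : ℝ) • fun i => K i 0) := by
    ext i j
    rw [mul_mul_apply, transpose_transpose]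
    fin_cases i <;> fin_cases j <;>
      simp [M, borderedMatrix, circleGram, dotProduct_circleForm_mulVec] <;> ring
  have h := congrArg det hgram
  rw [det_mul, det_mul, det_transpose, det_circleForm, hdet, det_borderedMatrix, mulVec_smul,
    dotProduct_smul, smul_dotProduct, smul_eq_mul, smul_eq_mul] at h
  linear_combination (-4) * h

def inversiveGram (Q₁ Q₂ Q₃ : ℝ) : Matrix (Fin 3) (Fin 3) ℝ :=
  !![1, 1 - 2*Q₁, 1 - 2*Q₃; 1 - 2*Q₁, 1, 1 - 2*Q₂; 1 - 2*Q₃, 1 - 2*Q₂, 1]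

lemma sq_sub_mul_eq_mul_dotProduct_adjugate_inversiveGram (a₁ a₂ a₃ Q₁ Q₂ Q₃ : ℝ) :
    (a₁*(Q₂*(Q₂-Q₃-Q₁)) + a₂*(Q₃*(Q₃-Q₁-Q₂)) + a₃*(Q₁*(Q₁-Q₂-Q₃)))^2
      - (Q₁*(Q₁-2*Q₂) + Q₂*(Q₂-2*Q₃) + Q₃*(Q₃-2*Q₁) + 4*Q₁*Q₂*Q₃)
        * (a₁*Q₂*(a₁*Q₂-2*a₂*Q₃) + a₂*Q₃*(a₂*Q₃-2*a₃*Q₁) + a₃*Q₁*(a₃*Q₁-2*a₁*Q₂))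
      = Q₁*Q₂*Q₃ * (![a₁, a₂, a₃] ⬝ᵥ adjugate (inversiveGram Q₁ Q₂ Q₃) *ᵥ ![a₁, a₂, a₃]) := by
  simp [inversiveGram, adjugate_fin_three, dotProduct, mulVec, Fin.sum_univ_succ]
  ring

theorem stmt_13
    (a₁ b₁ c₁ d₁ a₂ b₂ c₂ d₂ a₃ b₃ c₃ d₃ : ℝ)
    (h₁ : b₁^2 + c₁^2 - a₁*d₁ = 1)
    (h₂ : b₂^2 + c₂^2 - a₂*d₂ = 1)
    (h₃ : b₃^2 + c₃^2 - a₃*d₃ = 1)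
    (Q₁ Q₂ Q₃ : ℝ)
    (hQ₁ : 4*Q₁ = 2 + a₁*d₂ + a₂*d₁ - 2*(b₁*b₂ + c₁*c₂))
    (hQ₂ : 4*Q₂ = 2 + a₂*d₃ + a₃*d₂ - 2*(b₂*b₃ + c₂*c₃))
    (hQ₃ : 4*Q₃ = 2 + a₃*d₁ + a₁*d₃ - 2*(b₃*b₁ + c₃*c₁))
    (U : ℝ)
    (hU : U = Q₁*(Q₁-2*Q₂) + Q₂*(Q₂-2*Q₃) + Q₃*(Q₃-2*Q₁) + 4*Q₁*Q₂*Q₃)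
    (v₁ v₂ v₃ V : ℝ)
    (hv₁ : v₁ = Q₁*(Q₁-Q₂-Q₃))
    (hv₂ : v₂ = Q₂*(Q₂-Q₃-Q₁))
    (hv₃ : v₃ = Q₃*(Q₃-Q₁-Q₂))
    (hV : V = a₁*v₂ + a₂*v₃ + a₃*v₁)
    (W : ℝ)
    (hW : W = a₁*Q₂*(a₁*Q₂-2*a₂*Q₃) + a₂*Q₃*(a₂*Q₃-2*a₃*Q₁) + a₃*Q₁*(a₃*Q₁-2*a₁*Q₂))
    (Δ₄ : ℝ)
    (hΔ₄ : Δ₄ = Matrix.det !![a₁,b₁,c₁; a₂,b₂,c₂; a₃,b₃,c₃])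
    (t : ℝ)
    (W' D : ℝ)
    (hW' : W' = W*t^2 - (1/4)*Δ₄^2*(1-t^2))
    (hD : D = (1/4)*U*(1-t^2) + Q₁*Q₂*Q₃*t^2) :
    (V*t)^2 - U*W' = Δ₄^2*D := by
  set K : Fin 3 → Fin 4 → ℝ := ![![a₁, b₁, c₁, d₁], ![a₂, b₂, c₂, d₂], ![a₃, b₃, c₃, d₃]]
  have hgram : circleGram K = inversiveGram Q₁ Q₂ Q₃ := by
    ext i j
    fin_cases i <;> fin_cases j <;>
      simp [K, circleGram, inversiveGram, dotProduct_circleForm_mulVec] <;> linarith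
  have hΔ₄sq : Δ₄^2 = ![a₁, a₂, a₃] ⬝ᵥ adjugate (inversiveGram Q₁ Q₂ Q₃) *ᵥ ![a₁, a₂, a₃] := by
    have habc : !![a₁,b₁,c₁; a₂,b₂,c₂; a₃,b₃,c₃] = of fun i j : Fin 3 => K i j.castSucc := by
      ext i j
      fin_cases i <;> fin_cases j <;> rfl
    have ha : ![a₁, a₂, a₃] = fun i => K i 0 := by
      ext i
      fin_cases i <;> rfl
    rw [hΔ₄, habc, ha, ← hgram, sq_det_eq_dotProduct_adjugate_circleGram]
  have key := sq_sub_mul_eq_mul_dotProduct_adjugate_inversiveGram a₁ a₂ a₃ Q₁ Q₂ Q₃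
  rw [← hΔ₄sq, ← hv₁, ← hv₂, ← hv₃, ← hV, ← hU, ← hW] at key
  rw [hW', hD]
  linear_combination t^2 * key
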